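/- Let T = π, μ₁ = δ₀ (the Dirac measure at 0, so U₁(y) = y(0)) and μ₂ = δ_{π/2} (so U₂(y) = y(π/2)). Suppose q ∈ L¹(0,π) satisfies q(x + π/2) = q(x) for almost every x ∈ (0,π/2), and set q̃(x) := q(π − x). Then Δ₁(λ) = Δ̃₁(λ), Δ₂(λ) = Δ̃₂(λ), and ω(λ) = ω̃(λ) for all λ ∈ ℂ; consequently M(λ) = M̃(λ) for every λ with Δ₁(λ) ≠ 0. (Hence the specification of M and ω does not uniquely determine the potential when q is not symmetric, i.e., when condition S fails.) -/

import Mathlib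

open MeasureTheory Set Filter Topology Complex

noncomputable section

/-- `y, y'` solve `-y'' + q y = λ y` on `[0,T]`: `y` and `y'` are (absolutely continuous)
integrals of `y'` and of `(q - λ) y`, respectively. -/
def IsSLSol (T : ℝ) (q : ℝ → ℂ) (lam : ℂ) (y y' : ℝ → ℂ) : Prop :=
  (∀ x ∈ Icc (0:ℝ) T, y x = y 0 + ∫ t in (0:ℝ)..x, y' t) ∧
  (∀ x ∈ Icc (0:ℝ) T, y' x = y' 0 + ∫ t in (0:ℝ)..x, (q t - lam) * y t)

/-- The nonlocal form `U(y) = ∫_{[0,T]} y dμ` for the finite complex Borel measure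
with density `f` with respect to the finite (positive) measure `μ`. -/
def Uf (μ : Measure ℝ) (f : ℝ → ℂ) (y : ℝ → ℂ) : ℂ := ∫ x, f x * y x ∂μ

/-- `H := μ({0})` for the complex measure `f dμ`. -/
def Hconst (μ : Measure ℝ) (f : ℝ → ℂ) : ℂ := ∫ x in ({0} : Set ℝ), f x ∂μ

/-- `X1, X2` (with derivatives `X1', X2'`) form the fundamental system of solutions of
`-y'' + q y = λ y` with `X1(0,λ)=X2'(0,λ)=1`, `X1'(0,λ)=X2(0,λ)=0`, for every `λ`. -/
def IsFundamental (T : ℝ) (q : ℝ → ℂ) (X1 X1' X2 X2' : ℂ → ℝ → ℂ) : Prop :=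
  ∀ lam : ℂ, IsSLSol T q lam (X1 lam) (X1' lam) ∧ IsSLSol T q lam (X2 lam) (X2' lam) ∧
    X1 lam 0 = 1 ∧ X1' lam 0 = 0 ∧ X2 lam 0 = 0 ∧ X2' lam 0 = 1

/-- `Z1, Z2` form the fundamental system of solutions normalized at `x = T`:
`Z1(T,λ)=Z2'(T,λ)=1`, `Z1'(T,λ)=Z2(T,λ)=0`. -/
def IsFundamentalT (T : ℝ) (q : ℝ → ℂ) (Z1 Z1' Z2 Z2' : ℂ → ℝ → ℂ) : Prop :=
  ∀ lam : ℂ, IsSLSol T q lam (Z1 lam) (Z1' lam) ∧ IsSLSol T q lam (Z2 lam) (Z2' lam) ∧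
    Z1 lam T = 1 ∧ Z1' lam T = 0 ∧ Z2 lam T = 0 ∧ Z2' lam T = 1

/-- The characteristic function `Δ(λ) = U(X1(·,λ)) V1(X2(·,λ)) - U(X2(·,λ)) V1(X1(·,λ))`,
where `U(y) = ∫ y dμ` (density `f`) and `V1(y) = y(T)`. -/
def Delta1 (T : ℝ) (μ : Measure ℝ) (f : ℝ → ℂ) (X1 X2 : ℂ → ℝ → ℂ) (lam : ℂ) : ℂ :=
  Uf μ f (X1 lam) * X2 lam T - Uf μ f (X2 lam) * X1 lam T

/-- The characteristic function `Δ₁₁(λ) = U(X1(·,λ)) V2(X2(·,λ)) - U(X2(·,λ)) V2(X1(·,λ))`,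
where `V2(y) = y'(T)`. -/
def Delta11 (T : ℝ) (μ : Measure ℝ) (f : ℝ → ℂ) (X1 X2 X1' X2' : ℂ → ℝ → ℂ) (lam : ℂ) : ℂ :=
  Uf μ f (X1 lam) * X2' lam T - Uf μ f (X2 lam) * X1' lam T

/-- `ω(λ) = U1(X1)U2(X2) - U1(X2)U2(X1)`. -/
def omegaF (μ1 : Measure ℝ) (f1 : ℝ → ℂ) (μ2 : Measure ℝ) (f2 : ℝ → ℂ)
    (X1 X2 : ℂ → ℝ → ℂ) (lam : ℂ) : ℂ :=
  Uf μ1 f1 (X1 lam) * Uf μ2 f2 (X2 lam) - Uf μ1 f1 (X2 lam) * Uf μ2 f2 (X1 lam)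

/-- `φ(x,λ) = U1(X1(·,λ)) X2(x,λ) - U1(X2(·,λ)) X1(x,λ)`. -/
def phiF (μ1 : Measure ℝ) (f1 : ℝ → ℂ) (X1 X2 : ℂ → ℝ → ℂ) (lam : ℂ) (x : ℝ) : ℂ :=
  Uf μ1 f1 (X1 lam) * X2 lam x - Uf μ1 f1 (X2 lam) * X1 lam x

/-- `φ'(x,λ)`, the `x`-derivative of `φ`. -/
def phiF' (μ1 : Measure ℝ) (f1 : ℝ → ℂ) (X1 X2 X1' X2' : ℂ → ℝ → ℂ) (lam : ℂ) (x : ℝ) : ℂ :=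
  Uf μ1 f1 (X1 lam) * X2' lam x - Uf μ1 f1 (X2 lam) * X1' lam x

/-- `θ(x,λ) = U2(X2(·,λ)) X1(x,λ) - U2(X1(·,λ)) X2(x,λ)`. -/
def thetaF (μ2 : Measure ℝ) (f2 : ℝ → ℂ) (X1 X2 : ℂ → ℝ → ℂ) (lam : ℂ) (x : ℝ) : ℂ :=
  Uf μ2 f2 (X2 lam) * X1 lam x - Uf μ2 f2 (X1 lam) * X2 lam x

/-- `θ'(x,λ)`, the `x`-derivative of `θ`. -/
def thetaF' (μ2 : Measure ℝ) (f2 : ℝ → ℂ) (X1 X2 X1' X2' : ℂ → ℝ → ℂ) (lam : ℂ) (x : ℝ) : ℂ :=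
  Uf μ2 f2 (X2 lam) * X1' lam x - Uf μ2 f2 (X1 lam) * X2' lam x

/-- `ψ(x,λ) = X2(T,λ) X1(x,λ) - X1(T,λ) X2(x,λ)`. -/
def psiF (T : ℝ) (X1 X2 : ℂ → ℝ → ℂ) (lam : ℂ) (x : ℝ) : ℂ :=
  X2 lam T * X1 lam x - X1 lam T * X2 lam x

/-- `ψ'(x,λ)`, the `x`-derivative of `ψ`. -/
def psiF' (T : ℝ) (X1 X2 X1' X2' : ℂ → ℝ → ℂ) (lam : ℂ) (x : ℝ) : ℂ :=
  X2 lam T * X1' lam x - X1 lam T * X2' lam x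

/-- `Φ(·,λ)` (with derivative `Φ'(·,λ)`) is, for every `λ` with `Δ₁(λ) ≠ 0`, the solution
of the equation with `U1(Φ) = 1` and `V1(Φ) = Φ(T) = 0`. -/
def IsWeyl (T : ℝ) (q : ℝ → ℂ) (μ1 : Measure ℝ) (f1 : ℝ → ℂ) (X1 X2 : ℂ → ℝ → ℂ)
    (Φ Φ' : ℂ → ℝ → ℂ) : Prop :=
  ∀ lam : ℂ, Delta1 T μ1 f1 X1 X2 lam ≠ 0 →
    IsSLSol T q lam (Φ lam) (Φ' lam) ∧ Uf μ1 f1 (Φ lam) = 1 ∧ Φ lam T = 0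

/-- Two entire functions have exactly the same zeros with the same multiplicities. -/
def SameZeros (F G : ℂ → ℂ) : Prop :=
  ∀ z : ℂ, ∀ n : ℕ, (∀ k < n, iteratedDeriv k F z = 0) ↔ (∀ k < n, iteratedDeriv k G z = 0)

/-- The sector `Π_δ = {ρ ≠ 0 : arg ρ ∈ [δ, π - δ]}`. -/
def PiSector (δ : ℝ) : Set ℂ := {ρ : ℂ | ρ ≠ 0 ∧ Complex.arg ρ ∈ Icc δ (Real.pi - δ)}

/-- The filter `|ρ| → ∞, ρ ∈ Π_δ`. -/
def sectorFilter (δ : ℝ) : Filter ℂ :=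
  (Filter.comap (fun ρ : ℂ => ‖ρ‖) Filter.atTop) ⊓ Filter.principal (PiSector δ)

/-- The linear form `Q(y) = ∫_{[0,T]} y dν + β y(T) + γ y'(T)` (density `g` w.r.t. `ν`). -/
def Qform (T : ℝ) (ν : Measure ℝ) (g : ℝ → ℂ) (β γ : ℂ) (y y' : ℝ → ℂ) : ℂ :=
  Uf ν g y + β * y T + γ * y' T

/-!
The reflection `x ↦ π - x` turns solutions for `qt` into solutions for `q`. Comparing Wronskians
with `X₁`, `X₂` at the endpoints identifies `X̃₂(π - x)` with `ψ(x) = X₂(π) X₁(x) - X₁(π) X₂(x)`.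
At `x = 0` this is `Δ₁ = X₂(π) = X̃₂(π) = Δ̃₁`; at `x = π/2` it gives `Δ₂ = X̃₂(π/2)` and, with the
roles exchanged, `Δ̃₂ = X₂(π/2)`. On `[0, π/2]` the periodicity of `q` makes `x ↦ π/2 - x` carry
`qt` to `q` as well, whence `ω = X₂(π/2) = X̃₂(π/2) = ω̃`, and so `Δ₂ = Δ̃₂`. Finally
`M(λ) = Φ(π/2) = Δ₂(λ) / Δ₁(λ)`.

The Wronskian is constant since it is absolutely continuous with derivative `0` almost everywhere.
-/

open intervalIntegral

theorem AbsolutelyContinuousOnInterval.congr {X : Type*} [PseudoMetricSpace X] {f g : ℝ → X}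
    {a b : ℝ} (hf : AbsolutelyContinuousOnInterval f a b) (hfg : EqOn f g (uIcc a b)) :
    AbsolutelyContinuousOnInterval g a b := by
  refine hf.congr' (eventually_inf_principal.2 (Eventually.of_forall fun E hE => ?_))
  refine Finset.sum_congr rfl fun i hi => ?_
  rw [hfg (hE.1 i hi).1, hfg (hE.1 i hi).2]

theorem AbsolutelyContinuousOnInterval.ofReal {f : ℝ → ℝ} {a b : ℝ}
    (hf : AbsolutelyContinuousOnInterval f a b) :
    AbsolutelyContinuousOnInterval (fun x => (f x : ℂ)) a b := by
  simpa only [AbsolutelyContinuousOnInterval, Complex.isometry_ofReal.dist_eq] using hf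

theorem IntervalIntegrable.absolutelyContinuousOnInterval_intervalIntegral_complex
    {f : ℝ → ℂ} {a b c : ℝ} (hf : IntervalIntegrable f volume a b) (hc : c ∈ uIcc a b) :
    AbsolutelyContinuousOnInterval (fun x => ∫ t in c..x, f t) a b := by
  have hre := (IntervalIntegrable.absolutelyContinuousOnInterval_intervalIntegral
    ⟨hf.1.re, hf.2.re⟩ hc).ofReal
  have him := ((IntervalIntegrable.absolutelyContinuousOnInterval_intervalIntegral
    ⟨hf.1.im, hf.2.im⟩ hc).ofReal).const_smul Complex.I
  refine (hre.add him).congr fun x hx => ?_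
  have hfx : IntervalIntegrable f volume c x := hf.mono_set (uIcc_subset_uIcc hc hx)
  simp only [Pi.add_apply, smul_eq_mul]
  rw [intervalIntegral_re hfx, intervalIntegral_im hfx, mul_comm]
  exact Complex.re_add_im _

section Primitive

variable {b : ℝ} {f g : ℝ → ℂ}

theorem absolutelyContinuousOnInterval_of_eq_add_integral (hb : 0 ≤ b)
    (hg : IntervalIntegrable g volume 0 b) (hf : ∀ x ∈ Icc 0 b, f x = f 0 + ∫ t in 0..x, g t) :
    AbsolutelyContinuousOnInterval f 0 b := by
  refine ((LipschitzWith.const (f 0)).lipschitzOnWith.absolutelyContinuousOnInterval.add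
    (hg.absolutelyContinuousOnInterval_intervalIntegral_complex left_mem_uIcc)).congr
      fun x hx => ?_
  rw [uIcc_of_le hb] at hx
  exact (hf x hx).symm

theorem ae_hasDerivAt_of_eq_add_integral (hb : 0 ≤ b) (hg : IntervalIntegrable g volume 0 b)
    (hf : ∀ x ∈ Icc 0 b, f x = f 0 + ∫ t in 0..x, g t) :
    ∀ᵐ x, x ∈ Ioo 0 b → HasDerivAt f (g x) x := by
  filter_upwards [hg.ae_hasDerivAt_integral] with x hx hxb
  have hx' : x ∈ uIcc 0 b := by rw [uIcc_of_le hb]; exact Ioo_subset_Icc_self hxb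
  refine ((hx hx' 0 left_mem_uIcc).const_add (f 0)).congr_of_eventuallyEq ?_
  filter_upwards [Icc_mem_nhds hxb.1 hxb.2] with t ht using hf t ht

theorem eq_sub_integral_comp_sub_of_eq_add_integral (hb : 0 ≤ b)
    (hg : IntervalIntegrable g volume 0 b) (hf : ∀ x ∈ Icc 0 b, f x = f 0 + ∫ t in 0..x, g t) :
    ∀ x ∈ Icc 0 b, f (b - x) = f (b - 0) - ∫ t in 0..x, g (b - t) := by
  intro x hx
  have hbx : b - x ∈ Icc 0 b := ⟨by linarith [hx.2], by linarith [hx.1]⟩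
  rw [integral_comp_sub_left g b, sub_zero, ← integral_interval_sub_left hg
    (hg.mono_set (uIcc_subset_uIcc_left (by rwa [uIcc_of_le hb]))), hf b ⟨hb, le_rfl⟩,
    hf (b - x) hbx]
  ring

end Primitive

theorem IntervalIntegrable.exists_mem_Ico_integral_le {K : ℝ → ℝ} {a c ε : ℝ}
    (hK : IntervalIntegrable K volume a c) (hac : a < c) (hε : 0 < ε) :
    ∃ e ∈ Ico a c, ∫ t in e..c, K t ≤ ε := by
  have hlim : Tendsto (fun e => ∫ t in e..c, K t) (𝓝[Ico a c] c) (𝓝 0) := by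
    have := continuousOn_primitive_interval_left
      ((intervalIntegrable_iff_integrableOn_Icc_of_le hac.le).1 hK |>.mono_set
        (uIcc_of_le hac.le).le) c right_mem_uIcc
    simpa using (this.mono (by rw [uIcc_of_le hac.le]; exact Ico_subset_Icc_self)).tendsto
  have := right_nhdsWithin_Ico_neBot hac
  obtain ⟨e, hKe, he⟩ := ((hlim.eventually (ge_mem_nhds hε)).and self_mem_nhdsWithin).exists
  exact ⟨e, he, hKe⟩

theorem le_two_mul_of_le_add_integral {K m : ℝ → ℝ} {e c C : ℝ}
    (hK : IntervalIntegrable K volume e c) (hK0 : ∀ t, 0 ≤ K t) (hKc : ∫ t in e..c, K t ≤ 1 / 2)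
    (hm : ContinuousOn m (Ico e c)) (hm0 : ∀ x ∈ Ico e c, 0 ≤ m x)
    (hle : ∀ x ∈ Ico e c, m x ≤ C + ∫ t in e..x, K t * m t) :
    ∀ x ∈ Ico e c, m x ≤ 2 * C := by
  intro x hx
  have hsub : Icc e x ⊆ Ico e c := Icc_subset_Ico_right hx.2
  obtain ⟨s, hs, hmax⟩ := isCompact_Icc.exists_isMaxOn (nonempty_Icc.2 hx.1) (hm.mono hsub)
  have hKs : IntervalIntegrable K volume e s := hK.mono_set (uIcc_subset_uIcc_left
    (by rw [uIcc_of_le (hx.1.trans hx.2.le)]; exact ⟨hs.1, hs.2.trans hx.2.le⟩))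
  have hint : ∫ t in e..s, K t * m t ≤ (∫ t in e..s, K t) * m s := by
    rw [← intervalIntegral.integral_mul_const]
    refine integral_mono_on hs.1 (hKs.mul_continuousOn (hm.mono ?_)) (hKs.mul_const _)
      fun t ht => mul_le_mul_of_nonneg_left (hmax ⟨ht.1, ht.2.trans hs.2⟩) (hK0 t)
    rw [uIcc_of_le hs.1]; exact Icc_subset_Icc le_rfl hs.2 |>.trans (Icc_subset_Ico_right hx.2)
  have hKs_le : ∫ t in e..s, K t ≤ 1 / 2 :=
    (integral_mono_interval le_rfl hs.1 (hs.2.trans hx.2.le)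
      (Eventually.of_forall fun t => hK0 t) hK).trans hKc
  have hms := hle s (Icc_subset_Ico_right hx.2 hs)
  have hms0 := hm0 s (Icc_subset_Ico_right hx.2 hs)
  have hxs : m x ≤ m s := hmax ⟨hx.1, le_rfl⟩
  nlinarith [mul_le_mul_of_nonneg_right hKs_le hms0]

namespace IsSLSol

variable {b : ℝ} {q : ℝ → ℂ} {lam : ℂ} {y y' z z' : ℝ → ℂ}

theorem mono {b' : ℝ} (h : IsSLSol b q lam y y') (hb' : b' ≤ b) : IsSLSol b' q lam y y' :=
  ⟨fun x hx => h.1 x ⟨hx.1, hx.2.trans hb'⟩, fun x hx => h.2 x ⟨hx.1, hx.2.trans hb'⟩⟩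

theorem congr_q {q' : ℝ → ℂ} (hqq : ∀ᵐ t ∂(volume.restrict (Ioo 0 b)), q t = q' t)
    (h : IsSLSol b q lam y y') : IsSLSol b q' lam y y' := by
  refine ⟨h.1, fun x hx => ?_⟩
  rw [h.2 x hx, integral_of_le hx.1, integral_of_le hx.1, integral_Ioc_eq_integral_Ioo,
    integral_Ioc_eq_integral_Ioo]
  congr 1
  refine integral_congr_ae ?_
  filter_upwards [ae_mono (Measure.restrict_mono (Ioo_subset_Ioo le_rfl hx.2) le_rfl) hqq]
    with t ht
  rw [ht]

theorem intervalIntegrable_potential_mul (h : IsSLSol b q lam y y') (hb : 0 ≤ b)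
    (hq : IntervalIntegrable q volume 0 b) (hy' : IntervalIntegrable y' volume 0 b) :
    IntervalIntegrable (fun t => (q t - lam) * y t) volume 0 b :=
  (hq.sub intervalIntegrable_const).mul_continuousOn
    (absolutelyContinuousOnInterval_of_eq_add_integral hb hy' h.1).continuousOn

theorem continuousOn_of_intervalIntegrable (h : IsSLSol b q lam y y') (hb : 0 ≤ b)
    (hq : IntervalIntegrable q volume 0 b) (hy' : IntervalIntegrable y' volume 0 b) :
    ContinuousOn y (Icc 0 b) ∧ ContinuousOn y' (Icc 0 b) := by
  rw [← uIcc_of_le hb]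
  exact ⟨(absolutelyContinuousOnInterval_of_eq_add_integral hb hy' h.1).continuousOn,
    (absolutelyContinuousOnInterval_of_eq_add_integral hb
      (h.intervalIntegrable_potential_mul hb hq hy') h.2).continuousOn⟩

theorem norm_add_norm_le (h : IsSLSol b q lam y y') (hq : IntervalIntegrable q volume 0 b)
    {e x : ℝ} (he : 0 ≤ e) (hex : e ≤ x) (hxb : x ≤ b) (hy' : IntervalIntegrable y' volume 0 x) :
    ‖y x‖ + ‖y' x‖ ≤
      ‖y e‖ + ‖y' e‖ + ∫ t in e..x, (1 + ‖q t - lam‖) * (‖y t‖ + ‖y' t‖) := by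
  have hx := he.trans hex
  have hsub : uIcc e x ⊆ uIcc 0 x :=
    uIcc_subset_uIcc (by rw [uIcc_of_le hx]; exact ⟨he, hex⟩) right_mem_uIcc
  have hsub0 : uIcc 0 e ⊆ uIcc 0 x :=
    uIcc_subset_uIcc_left (by rw [uIcc_of_le hx]; exact ⟨he, hex⟩)
  have hqx : IntervalIntegrable q volume 0 x :=
    hq.mono_set (uIcc_subset_uIcc_left (by rw [uIcc_of_le (hx.trans hxb)]; exact ⟨hx, hxb⟩))
  have hsol := h.mono hxb
  have hg := hsol.intervalIntegrable_potential_mul hx hqx hy'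
  obtain ⟨hyc, hy'c⟩ := hsol.continuousOn_of_intervalIntegrable hx hqx hy'
  rw [← uIcc_of_le hx] at hyc hy'c
  have h1 : y x = y e + ∫ t in e..x, y' t := by
    rw [← integral_interval_sub_left hy' (hy'.mono_set hsub0), hsol.1 x ⟨hx, le_rfl⟩,
      hsol.1 e ⟨he, hex⟩]
    ring
  have h2 : y' x = y' e + ∫ t in e..x, (q t - lam) * y t := by
    rw [← integral_interval_sub_left hg (hg.mono_set hsub0), hsol.2 x ⟨hx, le_rfl⟩,
      hsol.2 e ⟨he, hex⟩]
    ring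
  have hint : ‖∫ t in e..x, y' t‖ + ‖∫ t in e..x, (q t - lam) * y t‖ ≤
      ∫ t in e..x, (1 + ‖q t - lam‖) * (‖y t‖ + ‖y' t‖) :=
    calc _ ≤ (∫ t in e..x, ‖y' t‖) + ∫ t in e..x, ‖(q t - lam) * y t‖ :=
          add_le_add (norm_integral_le_integral_norm hex) (norm_integral_le_integral_norm hex)
      _ = ∫ t in e..x, (‖y' t‖ + ‖(q t - lam) * y t‖) :=
          (integral_add (hy'.mono_set hsub).norm (hg.mono_set hsub).norm).symm
      _ ≤ _ := by
          refine integral_mono_on hex ((hy'.mono_set hsub).norm.add (hg.mono_set hsub).norm)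
            ((intervalIntegrable_const.add ((hqx.mono_set hsub).sub
              intervalIntegrable_const).norm).mul_continuousOn
                ((hyc.norm.add hy'c.norm).mono hsub)) fun t _ => ?_
          rw [norm_mul]
          nlinarith [norm_nonneg (y t), norm_nonneg (y' t), norm_nonneg (q t - lam)]
  rw [h1, h2]
  linarith [norm_add_le (y e) (∫ t in e..x, y' t),
    norm_add_le (y' e) (∫ t in e..x, (q t - lam) * y t)]

theorem continuousOn_Ico_of_forall_lt (h : IsSLSol b q lam y y')
    (hq : IntervalIntegrable q volume 0 b) {c : ℝ} (hcb : c ≤ b)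
    (hlt : ∀ x ∈ Ico 0 c, IntervalIntegrable y' volume 0 x) :
    ContinuousOn y (Ico 0 c) ∧ ContinuousOn y' (Ico 0 c) := by
  have hloc : ∀ z ∈ Ico 0 c, ∃ t, IsOpen t ∧ z ∈ t ∧
      ContinuousOn y (Ico 0 c ∩ t) ∧ ContinuousOn y' (Ico 0 c ∩ t) := by
    intro z hz
    obtain ⟨x, hzx, hxc⟩ := exists_between hz.2
    have hx : x ∈ Ico 0 c := ⟨hz.1.trans hzx.le, hxc⟩
    obtain ⟨hyc, hy'c⟩ := (h.mono (hxc.le.trans hcb)).continuousOn_of_intervalIntegrable hx.1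
      (hq.mono_set (uIcc_subset_uIcc_left
        (by rw [uIcc_of_le (hx.1.trans (hxc.le.trans hcb))]; exact ⟨hx.1, hxc.le.trans hcb⟩)))
      (hlt x hx)
    have hsub : Ico 0 c ∩ Iio x ⊆ Icc 0 x := fun t ht => ⟨ht.1.1, ht.2.le⟩
    exact ⟨Iio x, isOpen_Iio, hzx, hyc.mono hsub, hy'c.mono hsub⟩
  exact ⟨continuousOn_of_locally_continuousOn fun z hz =>
      (hloc z hz).imp fun _ ht => ⟨ht.1, ht.2.1, ht.2.2.1⟩,
    continuousOn_of_locally_continuousOn fun z hz =>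
      (hloc z hz).imp fun _ ht => ⟨ht.1, ht.2.1, ht.2.2.2⟩⟩

theorem intervalIntegrable_deriv_of_forall_lt (h : IsSLSol b q lam y y')
    (hq : IntervalIntegrable q volume 0 b) {c : ℝ} (hc : 0 < c) (hcb : c ≤ b)
    (hlt : ∀ x ∈ Ico 0 c, IntervalIntegrable y' volume 0 x) :
    IntervalIntegrable y' volume 0 c := by
  have hcont := h.continuousOn_Ico_of_forall_lt hq hcb hlt
  have hK : IntervalIntegrable (fun t => 1 + ‖q t - lam‖) volume 0 c :=
    intervalIntegrable_const.add ((hq.mono_set (uIcc_subset_uIcc_left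
      (by rw [uIcc_of_le (hc.le.trans hcb)]; exact ⟨hc.le, hcb⟩))).sub
        intervalIntegrable_const).norm
  obtain ⟨e, he, hKe⟩ := hK.exists_mem_Ico_integral_le hc (by norm_num : (0:ℝ) < 1 / 2)
  have hbound := le_two_mul_of_le_add_integral (m := fun t => ‖y t‖ + ‖y' t‖)
    (hK.mono_set (uIcc_subset_uIcc_right (by rw [uIcc_of_le hc.le]; exact ⟨he.1, he.2.le⟩)))
    (fun t => by positivity) hKe
    ((hcont.1.norm.add hcont.2.norm).mono (Ico_subset_Ico_left he.1)) (fun _ _ => by positivity)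
    fun x hx => h.norm_add_norm_le hq he.1 hx.1 (hx.2.le.trans hcb)
      (hlt x ⟨he.1.trans hx.1, hx.2⟩)
  refine (hlt e he).trans ?_
  rw [intervalIntegrable_iff_integrableOn_Ioo_of_le he.2.le]
  refine (integrableOn_const (C := 2 * (‖y e‖ + ‖y' e‖)) measure_Ioo_lt_top.ne).mono'
    ((hcont.2.mono (Ioo_subset_Ico_self.trans (Ico_subset_Ico_left he.1))).aestronglyMeasurable
      measurableSet_Ioo) ?_
  filter_upwards [ae_restrict_mem measurableSet_Ioo] with t ht
  linarith [hbound t ⟨ht.1.le, ht.2⟩, norm_nonneg (y t)]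

/-- `IsSLSol` does not ask `y'` to be integrable, and `∫ t in 0..x, y' t` is `0` when it is not.
Below the first point `c` where integrability fails a Gronwall bound keeps `y'` bounded, and above
`c` the junk value makes `y` constant; so `(q - lam) * y`, hence `y'`, is integrable on `[0, b]`. -/
theorem intervalIntegrable_deriv (h : IsSLSol b q lam y y') (hb : 0 ≤ b)
    (hq : IntervalIntegrable q volume 0 b) : IntervalIntegrable y' volume 0 b := by
  by_contra hyb
  set A := {x ∈ Icc 0 b | ¬ IntervalIntegrable y' volume 0 x}
  have hbA : b ∈ A := ⟨⟨hb, le_rfl⟩, hyb⟩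
  have hAbdd : BddBelow A := ⟨0, fun x hx => hx.1.1⟩
  set c := sInf A
  have hc0 : 0 ≤ c := le_csInf ⟨b, hbA⟩ fun x hx => hx.1.1
  have hcb : c ≤ b := csInf_le hAbdd hbA
  have hlt : ∀ x ∈ Ico 0 c, IntervalIntegrable y' volume 0 x := fun x hx => by
    by_contra hx'
    exact (csInf_le hAbdd ⟨⟨hx.1, hx.2.le.trans hcb⟩, hx'⟩).not_gt hx.2
  have hyc : IntervalIntegrable y' volume 0 c := by
    rcases hc0.eq_or_lt with hc | hc
    · rw [← hc]
    · exact h.intervalIntegrable_deriv_of_forall_lt hq hc hcb hlt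
  have hconst : ∀ x ∈ Ioc c b, y x = y 0 := fun x hx => by
    obtain ⟨a, ha, hax⟩ := exists_lt_of_csInf_lt ⟨b, hbA⟩ hx.1
    have hx' : ¬ IntervalIntegrable y' volume 0 x := fun hx' => ha.2 (hx'.mono_set
      (uIcc_subset_uIcc_left (by rw [uIcc_of_le (ha.1.1.trans hax.le)]; exact ⟨ha.1.1, hax.le⟩)))
    rw [h.1 x ⟨hc0.trans hx.1.le, hx.2⟩, integral_undef hx', add_zero]
  have hqc : IntervalIntegrable q volume 0 c :=
    hq.mono_set (uIcc_subset_uIcc_left (by rw [uIcc_of_le hb]; exact ⟨hc0, hcb⟩))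
  have hg : IntervalIntegrable (fun t => (q t - lam) * y t) volume 0 b := by
    refine ((h.mono hcb).intervalIntegrable_potential_mul hc0 hqc hyc).trans ?_
    refine (intervalIntegrable_congr (f := fun t => (q t - lam) * y 0) fun t ht => ?_).1
      (((hq.mono_set (uIcc_subset_uIcc_right (by rw [uIcc_of_le hb]; exact ⟨hc0, hcb⟩))).sub
        intervalIntegrable_const).mul_const (y 0))
    rw [uIoc_of_le hcb] at ht
    simp only [hconst t ht]
  exact hyb ((absolutelyContinuousOnInterval_of_eq_add_integral hb hg h.2).continuousOn
    |>.intervalIntegrable)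

theorem intervalIntegrable (h : IsSLSol b q lam y y') (hb : 0 ≤ b)
    (hq : IntervalIntegrable q volume 0 b) :
    IntervalIntegrable y' volume 0 b ∧
      IntervalIntegrable (fun t => (q t - lam) * y t) volume 0 b :=
  ⟨h.intervalIntegrable_deriv hb hq,
    h.intervalIntegrable_potential_mul hb hq (h.intervalIntegrable_deriv hb hq)⟩

theorem wronskian_eq (hy : IsSLSol b q lam y y') (hz : IsSLSol b q lam z z') (hb : 0 ≤ b)
    (hq : IntervalIntegrable q volume 0 b) :
    ∀ x ∈ Icc 0 b, y x * z' x - y' x * z x = y 0 * z' 0 - y' 0 * z 0 := by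
  obtain ⟨hy'i, hgyi⟩ := hy.intervalIntegrable hb hq
  obtain ⟨hz'i, hgzi⟩ := hz.intervalIntegrable hb hq
  have hW : AbsolutelyContinuousOnInterval (fun x => y x * z' x - y' x * z x) 0 b := by
    simpa only [smul_eq_mul] using
      ((absolutelyContinuousOnInterval_of_eq_add_integral hb hy'i hy.1).fun_smul
        (absolutelyContinuousOnInterval_of_eq_add_integral hb hgzi hz.2)).fun_sub
      ((absolutelyContinuousOnInterval_of_eq_add_integral hb hgyi hy.2).fun_smul
        (absolutelyContinuousOnInterval_of_eq_add_integral hb hz'i hz.1))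
  obtain ⟨C, hC⟩ := hW.const_of_ae_hasDerivAt_zero <| by
    filter_upwards [Ioo_ae_eq_Icc.mem_iff, ae_hasDerivAt_of_eq_add_integral hb hy'i hy.1,
      ae_hasDerivAt_of_eq_add_integral hb hgyi hy.2, ae_hasDerivAt_of_eq_add_integral hb hz'i hz.1,
      ae_hasDerivAt_of_eq_add_integral hb hgzi hz.2] with x hIoo dy dy' dz dz' hx
    rw [uIcc_of_le hb] at hx
    have hx' := hIoo.2 hx
    exact (((dy hx').mul (dz' hx')).sub ((dy' hx').mul (dz hx'))).congr_deriv (by ring)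
  intro x hx
  rw [hC x (by rwa [uIcc_of_le hb]), hC 0 left_mem_uIcc]

theorem comp_sub (h : IsSLSol b q lam y y') (hb : 0 ≤ b) (hq : IntervalIntegrable q volume 0 b) :
    IsSLSol b (fun x => q (b - x)) lam (fun x => y (b - x)) (fun x => -y' (b - x)) := by
  obtain ⟨hy'i, hgi⟩ := h.intervalIntegrable hb hq
  refine ⟨fun x hx => ?_, fun x hx => ?_⟩
  · simp only [intervalIntegral.integral_neg,
      eq_sub_integral_comp_sub_of_eq_add_integral hb hy'i h.1 x hx]
    ring
  · simp only [eq_sub_integral_comp_sub_of_eq_add_integral hb hgi h.2 x hx]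
    ring

end IsSLSol

namespace IsFundamental

variable {b : ℝ} {q : ℝ → ℂ} {X1 X1' X2 X2' : ℂ → ℝ → ℂ} {lam : ℂ} {y y' : ℝ → ℂ}

theorem mono {b' : ℝ} (hX : IsFundamental b q X1 X1' X2 X2') (hb' : b' ≤ b) :
    IsFundamental b' q X1 X1' X2 X2' := fun lam =>
  let ⟨h1, h2, hi⟩ := hX lam
  ⟨h1.mono hb', h2.mono hb', hi⟩

theorem psiF_zero (hX : IsFundamental b q X1 X1' X2 X2') : psiF b X1 X2 lam 0 = X2 lam b := by
  obtain ⟨-, -, h1, -, h3, -⟩ := hX lam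
  simp [psiF, h1, h3]

theorem eq_of_isSLSol (hX : IsFundamental b q X1 X1' X2 X2') (hb : 0 ≤ b)
    (hq : IntervalIntegrable q volume 0 b) (hy : IsSLSol b q lam y y') :
    ∀ x ∈ Icc 0 b, y x = y 0 * X1 lam x + y' 0 * X2 lam x := by
  obtain ⟨h1, h2, i1, i2, i3, i4⟩ := hX lam
  intro x hx
  have e1 := hy.wronskian_eq h2 hb hq x hx
  have e2 := hy.wronskian_eq h1 hb hq x hx
  have e3 := h1.wronskian_eq h2 hb hq x hx
  rw [i3, i4] at e1
  rw [i1, i2] at e2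
  rw [i1, i2, i3, i4] at e3
  linear_combination X1 lam x * e1 - X2 lam x * e2 - y x * e3

theorem mul_eq_psiF (hX : IsFundamental b q X1 X1' X2 X2') (hb : 0 ≤ b)
    (hq : IntervalIntegrable q volume 0 b) (hy : IsSLSol b q lam y y') (hy0 : y 0 = 1)
    (hyb : y b = 0) :
    ∀ x ∈ Icc 0 b, y x * X2 lam b = psiF b X1 X2 lam x := by
  intro x hx
  have rx := hX.eq_of_isSLSol hb hq hy x hx
  have rb := hX.eq_of_isSLSol hb hq hy b ⟨hb, le_rfl⟩
  rw [hy0] at rx rb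
  rw [hyb] at rb
  unfold psiF
  linear_combination X2 lam b * rx - X2 lam x * rb

theorem psiF_eq_comp_sub {qt : ℝ → ℂ} {Xt1 Xt1' Xt2 Xt2' : ℂ → ℝ → ℂ}
    (hX : IsFundamental b q X1 X1' X2 X2') (hXt : IsFundamental b qt Xt1 Xt1' Xt2 Xt2')
    (hb : 0 ≤ b) (hq : IntervalIntegrable q volume 0 b) (hqt : IntervalIntegrable qt volume 0 b)
    (hrefl : ∀ᵐ x ∂(volume.restrict (Ioo 0 b)), qt (b - x) = q x) (lam : ℂ) :
    ∀ x ∈ Icc 0 b, psiF b X1 X2 lam x = Xt2 lam (b - x) := by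
  obtain ⟨-, hu, -, -, hu0, hu0'⟩ := hXt lam
  have hv := (hu.comp_sub hb hqt).congr_q hrefl
  obtain ⟨h1, h2, i1, i2, i3, i4⟩ := hX lam
  have w1 := h1.wronskian_eq hv hb hq b ⟨hb, le_rfl⟩
  have w2 := h2.wronskian_eq hv hb hq b ⟨hb, le_rfl⟩
  intro x hx
  have r := hX.eq_of_isSLSol hb hq hv x hx
  simp only [sub_self, sub_zero, hu0, hu0', i1, i2, i3, i4] at w1 w2 r
  unfold psiF
  linear_combination -r - X1 lam x * w2 + X2 lam x * w1

end IsFundamental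

/-- counterexample: `T = π`, `U₁(y)=y(0)`, `U₂(y)=y(π/2)`; if
`q(x+π/2) = q(x)` a.e. on `(0,π/2)` and `q̃(x) = q(π-x)`, then `Δ₁ = Δ̃₁`, `Δ₂ = Δ̃₂`,
`ω = ω̃`, and `M(λ) = M̃(λ)` whenever `Δ₁(λ) ≠ 0`. -/
theorem statement17
    (q qt : ℝ → ℂ)
    (hq : IntegrableOn q (Ioo 0 Real.pi)) (hqt : IntegrableOn qt (Ioo 0 Real.pi))
    (hper : ∀ᵐ x ∂(volume.restrict (Ioo 0 (Real.pi/2))), q (x + Real.pi/2) = q x)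
    (hqtdef : ∀ x : ℝ, qt x = q (Real.pi - x))
    (X1 X1' X2 X2' Xt1 Xt1' Xt2 Xt2' : ℂ → ℝ → ℂ)
    (hX : IsFundamental Real.pi q X1 X1' X2 X2')
    (hXt : IsFundamental Real.pi qt Xt1 Xt1' Xt2 Xt2')
    (Φ Φ' Φt Φt' : ℂ → ℝ → ℂ)
    (hΦ : ∀ lam : ℂ, X1 lam 0 * X2 lam Real.pi - X2 lam 0 * X1 lam Real.pi ≠ 0 →
      IsSLSol Real.pi q lam (Φ lam) (Φ' lam) ∧ Φ lam 0 = 1 ∧ Φ lam Real.pi = 0)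
    (hΦt : ∀ lam : ℂ, Xt1 lam 0 * Xt2 lam Real.pi - Xt2 lam 0 * Xt1 lam Real.pi ≠ 0 →
      IsSLSol Real.pi qt lam (Φt lam) (Φt' lam) ∧ Φt lam 0 = 1 ∧ Φt lam Real.pi = 0) :
    (∀ lam : ℂ, X1 lam 0 * X2 lam Real.pi - X2 lam 0 * X1 lam Real.pi =
      Xt1 lam 0 * Xt2 lam Real.pi - Xt2 lam 0 * Xt1 lam Real.pi) ∧
    (∀ lam : ℂ, X1 lam (Real.pi/2) * X2 lam Real.pi - X2 lam (Real.pi/2) * X1 lam Real.pi =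
      Xt1 lam (Real.pi/2) * Xt2 lam Real.pi - Xt2 lam (Real.pi/2) * Xt1 lam Real.pi) ∧
    (∀ lam : ℂ, X1 lam 0 * X2 lam (Real.pi/2) - X2 lam 0 * X1 lam (Real.pi/2) =
      Xt1 lam 0 * Xt2 lam (Real.pi/2) - Xt2 lam 0 * Xt1 lam (Real.pi/2)) ∧
    (∀ lam : ℂ, X1 lam 0 * X2 lam Real.pi - X2 lam 0 * X1 lam Real.pi ≠ 0 →
      Φ lam (Real.pi/2) = Φt lam (Real.pi/2)) := by
  have hpi : 0 ≤ Real.pi := Real.pi_pos.le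
  have hmid : Real.pi / 2 ∈ Icc 0 Real.pi := ⟨by positivity, by linarith⟩
  have hqI : IntervalIntegrable q volume 0 Real.pi :=
    (intervalIntegrable_iff_integrableOn_Ioo_of_le hpi).2 hq
  have hqtI : IntervalIntegrable qt volume 0 Real.pi :=
    (intervalIntegrable_iff_integrableOn_Ioo_of_le hpi).2 hqt
  have hhalf : uIcc 0 (Real.pi / 2) ⊆ uIcc 0 Real.pi :=
    uIcc_subset_uIcc_left (by rwa [uIcc_of_le hpi])
  have hψ := hX.psiF_eq_comp_sub hXt hpi hqI hqtI
    (Eventually.of_forall fun x => by rw [hqtdef, sub_sub_cancel])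
  have hψt := hXt.psiF_eq_comp_sub hX hpi hqtI hqI (Eventually.of_forall fun x => (hqtdef x).symm)
  have hψhalf := (hX.mono hmid.2).psiF_eq_comp_sub (hXt.mono hmid.2) hmid.1 (hqI.mono_set hhalf)
    (hqtI.mono_set hhalf) (hper.mono fun x hx => by rw [hqtdef, ← hx]; ring_nf)
  have hΔ1 : ∀ lam, X2 lam Real.pi = Xt2 lam Real.pi := fun lam => by
    simpa [hX.psiF_zero] using hψ lam 0 ⟨le_rfl, hpi⟩
  have hω : ∀ lam, X2 lam (Real.pi / 2) = Xt2 lam (Real.pi / 2) := fun lam => by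
    simpa [(hX.mono hmid.2).psiF_zero] using hψhalf lam 0 ⟨le_rfl, hmid.1⟩
  have hΔ2 : ∀ lam,
      psiF Real.pi X1 X2 lam (Real.pi / 2) = psiF Real.pi Xt1 Xt2 lam (Real.pi / 2) := fun lam => by
    rw [hψ lam _ hmid, hψt lam _ hmid, show Real.pi - Real.pi / 2 = Real.pi / 2 by ring, hω]
  refine ⟨fun lam => ?_, fun lam => ?_, fun lam => ?_, fun lam hne => ?_⟩
  all_goals obtain ⟨-, -, i1, -, i3, -⟩ := hX lam; obtain ⟨-, -, j1, -, j3, -⟩ := hXt lam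
  · simp [i1, i3, j1, j3, hΔ1]
  · simpa [psiF, mul_comm] using hΔ2 lam
  · simp [i1, i3, j1, j3, hω]
  · obtain ⟨hs, h0, hπ⟩ := hΦ lam hne
    obtain ⟨hst, ht0, htπ⟩ := hΦt lam (by simpa [i1, i3, j1, j3, hΔ1] using hne)
    simp only [i1, i3, one_mul, zero_mul, sub_zero] at hne
    refine mul_right_cancel₀ hne ?_
    rw [hX.mul_eq_psiF hpi hqI hs h0 hπ _ hmid, hΔ1, hXt.mul_eq_psiF hpi hqtI hst ht0 htπ _ hmid,
      hΔ2]
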